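/- If P is a Markov transition kernel on a product space Z = Z₀ × ⋯ × Z_K whose transitions depend only on the first coordinate, i.e. P(· | z₀,…,z_K) = P(· | z₀), and each coordinate marginal kernel P_k(z*_k | z₀) = ∫ P(z*₀,…,z*_K | z₀) dz*_{-k} has π as a stationary measure, then the measure π*(·) = ∫ P(· | z₀) π(dz₀) on the product space is a stationary measure for P. -/

import Mathlib

/-!
Since the kernel reads only `z 0`, running it from `π* = π.bind p0` amounts to first drawing
`z 0` from π mixed over the 0-th marginal kernel and then applying `p0`; stationarity of that marginal
turns this distribution back into `π`, so the result is `π.bind p0 = π*` again.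
-/

open MeasureTheory

namespace MeasureTheory.Measure

variable {α β γ : Type*} [MeasurableSpace α] [MeasurableSpace β] [MeasurableSpace γ]

theorem bind_map (μ : Measure α) {f : α → β} {g : β → Measure γ}
    (hf : Measurable f) (hg : Measurable g) :
    (μ.map f).bind g = μ.bind (g ∘ f) := by
  rw [← bind_dirac_eq_map μ hf,
    bind_bind (f := fun a => dirac (f a)) (measurable_dirac.comp hf).aemeasurable hg.aemeasurable]
  congr 1
  funext a
  exact dirac_bind hg (f a)

theorem bind_bind_comp_eq_of_bind_map_eq {μ : Measure β} {q : β → Measure γ} {e : γ → β}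
    (hq : Measurable q) (he : Measurable e) (hμ : μ.bind (fun b => (q b).map e) = μ) :
    (μ.bind q).bind (q ∘ e) = μ.bind q := by
  have hqe : Measurable fun b => (q b).map e := (measurable_map e he).comp hq
  calc (μ.bind q).bind (q ∘ e)
      = μ.bind (fun b => (q b).bind (q ∘ e)) :=
        bind_bind hq.aemeasurable (hq.comp he).aemeasurable
    _ = μ.bind (fun b => ((q b).map e).bind q) := by
        simp only [bind_map _ he hq]
    _ = (μ.bind (fun b => (q b).map e)).bind q :=
        (bind_bind hqe.aemeasurable hq.aemeasurable).symm
    _ = μ.bind q := by rw [hμ]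

end MeasureTheory.Measure

theorem stmt0_general {α : Type*} [MeasurableSpace α] (K : ℕ)
    (π : Measure α)
    (p0 : α → Measure (Fin (K + 1) → α))
    (hmeas : Measurable p0)
    (hstat : ∀ k : Fin (K + 1),
      π.bind (fun z₀ => (p0 z₀).map (fun w => w k)) = π) :
    (π.bind p0).bind (fun z => p0 (z 0)) = π.bind p0 :=
  Measure.bind_bind_comp_eq_of_bind_map_eq hmeas (measurable_pi_apply 0) (hstat 0)

/-- If the product-space kernel `P z = p0 (z 0)` depends only on the
first coordinate and every coordinate marginal kernel leaves `π` invariant, then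
`π* = π.bind p0` is stationary for the product-space kernel. -/
theorem stmt0 {α : Type*} [MeasurableSpace α] (K : ℕ)
    (π : Measure α) [IsProbabilityMeasure π]
    (p0 : α → Measure (Fin (K + 1) → α))
    (hmeas : Measurable p0)
    (hprob : ∀ z₀, IsProbabilityMeasure (p0 z₀))
    (hstat : ∀ k : Fin (K + 1),
      π.bind (fun z₀ => (p0 z₀).map (fun w => w k)) = π) :
    (π.bind p0).bind (fun z => p0 (z 0)) = π.bind p0 :=
  stmt0_general K π p0 hmeas hstat
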